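/- Suppose the belief kernel b is deterministic (a function β : X → X^τ) and injective in the sense that β determines x^τ from x, and the optimal policies satisfy π*(·|x) = π^τ*(·|β(x)) for all x. Then under the reward-matching and kernel-commutation conditions, the optimal Q-functions coincide through the belief: Q^τ*(β(x), a) = Q*(x, a) for all (x,a). -/
import Mathlib


open scoped ENNReal

/-- Expectation of a real-valued function under a `PMF` on a finite type. -/
noncomputable def Epmf {α : Type*} [Fintype α] (μ : PMF α) (f : α → ℝ) : ℝ :=
  ∑ a, (μ a).toReal * f a

lemma Epmf_sub {α : Type*} [Fintype α] (μ : PMF α) (f g : α → ℝ) :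
    Epmf μ f - Epmf μ g = Epmf μ (fun a => f a - g a) := by
  simp [Epmf, mul_sub, Finset.sum_sub_distrib]

lemma Epmf_sum_one {α : Type*} [Fintype α] (μ : PMF α) :
    ∑ a, (μ a).toReal = 1 := by
  have h := μ.tsum_coe
  rw [tsum_fintype] at h
  have : (∑ a, (μ a)).toReal = (1 : ℝ≥0∞).toReal := by rw [h]
  rw [ENNReal.toReal_sum (fun a _ => (μ.apply_ne_top a))] at this
  simpa using this

lemma abs_Epmf_le {α : Type*} [Fintype α] (μ : PMF α) (f : α → ℝ) (D : ℝ)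
    (h : ∀ a, |f a| ≤ D) : |Epmf μ f| ≤ D := by
  calc |Epmf μ f| ≤ ∑ a, |(μ a).toReal * f a| := Finset.abs_sum_le_sum_abs _ _
    _ ≤ ∑ a, (μ a).toReal * D := by
        apply Finset.sum_le_sum
        intro a _
        rw [abs_mul, abs_of_nonneg ENNReal.toReal_nonneg]
        exact mul_le_mul_of_nonneg_left (h a) ENNReal.toReal_nonneg
    _ = D := by rw [← Finset.sum_mul, Epmf_sum_one, one_mul]

lemma abs_ciSup_sub_ciSup {A : Type*} [Fintype A] [Nonempty A]
    (f g : A → ℝ) (D : ℝ) (h : ∀ a, |f a - g a| ≤ D) :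
    |(⨆ a, f a) - ⨆ a, g a| ≤ D := by
  have hf : BddAbove (Set.range f) := Set.Finite.bddAbove (Set.finite_range f)
  have hg : BddAbove (Set.range g) := Set.Finite.bddAbove (Set.finite_range g)
  rw [abs_sub_le_iff]
  constructor
  · rw [sub_le_iff_le_add]
    apply ciSup_le
    intro a
    have h1 := (abs_le.mp (h a)).2
    have h2 := le_ciSup hg a
    linarith
  · rw [sub_le_iff_le_add]
    apply ciSup_le
    intro a
    have h1 := (abs_le.mp (h a)).1
    have h2 := le_ciSup hf a
    linarith

/-- Deterministic-belief case: if the belief is a deterministic injective map `β`,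
the optimal policies coincide through `β`, rewards match and transitions commute
through `β`, then the optimal Q-functions coincide through the belief:
`Qτ*(β x, a) = Q*(x, a)` for all `(x, a)`. -/
theorem deterministic_belief_optimal_q_eq
    {X Xτ A : Type*} [Fintype X] [Fintype Xτ] [Fintype A] [Nonempty A]
    (γ : ℝ) (hγ0 : 0 < γ) (hγ1 : γ < 1)
    (β : X → Xτ) (hβ : Function.Injective β)
    (P : X → A → PMF X) (Pτ : Xτ → A → PMF Xτ)
    (R : X → A → ℝ) (Rτ : Xτ → A → ℝ)
    (πstar : X → PMF A) (πτstar : Xτ → PMF A)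
    (Qstar : X → A → ℝ) (Qτstar : Xτ → A → ℝ)
    -- reward matching through β
    (hR : ∀ x a, R x a = Rτ (β x) a)
    -- kernel commutation through β
    (hcomm : ∀ x a (f : Xτ → ℝ),
      Epmf (P x a) (fun x' => f (β x')) = Epmf (Pτ (β x) a) f)
    -- optimal policies coincide through β
    (hπ : ∀ x, πstar x = πτstar (β x))
    -- Bellman optimality equations
    (hQ : ∀ x a, Qstar x a
      = R x a + γ * Epmf (P x a) (fun x' => ⨆ a', Qstar x' a'))
    (hQτ : ∀ xτ a, Qτstar xτ a
      = Rτ xτ a + γ * Epmf (Pτ xτ a) (fun xτ' => ⨆ a', Qτstar xτ' a')) :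
    ∀ x a, Qτstar (β x) a = Qstar x a := by
  intro x₀ a₀
  have : Nonempty X := ⟨x₀⟩
  set g : X → A → ℝ := fun x a => Qτstar (β x) a - Qstar x a with hg
  -- key recursion
  have hrec : ∀ x a, g x a
      = γ * Epmf (P x a) (fun x' => (⨆ a', Qτstar (β x') a') - ⨆ a', Qstar x' a') := by
    intro x a
    have h1 : Qτstar (β x) a = Rτ (β x) a
        + γ * Epmf (P x a) (fun x' => ⨆ a', Qτstar (β x') a') := by
      rw [hQτ, ← hcomm]
    rw [hg]
    simp only [h1, hQ x a, hR x a]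
    ring_nf
    rw [← mul_sub, Epmf_sub]
  obtain ⟨⟨xm, am⟩, hmax⟩ := Finite.exists_max (fun p : X × A => |g p.1 p.2|)
  set D := |g xm am| with hD
  have hDle : D ≤ γ * D := by
    have h2 : |g xm am| ≤ γ * D := by
      rw [hrec xm am, abs_mul, abs_of_pos hγ0]
      apply mul_le_mul_of_nonneg_left _ hγ0.le
      apply abs_Epmf_le
      intro x'
      apply abs_ciSup_sub_ciSup
      intro a'
      exact (hmax (x', a')).trans_eq hD.symm
    rw [hD]
    exact h2.trans (by rw [hD])
  have hD0 : D ≤ 0 := by nlinarith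
  have := hmax (x₀, a₀)
  have : |g x₀ a₀| ≤ 0 := le_trans this hD0
  have : g x₀ a₀ = 0 := abs_nonpos_iff.mp this
  simpa [hg, sub_eq_zero] using this
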